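/- Under the hypotheses of the previous statement (finite-energy radial solution with decay exponents β₁, β₂), the constraints 0 < (β₁-1)(β₂-1) < (N₁+1)(N₂+1), β₂(β₁-1) > N₂(N₁+1), and 0 < β₁(β₂-1) < N₁(N₂+1) hold. -/

import Mathlib

/-!
Write `P = r u'` and `Q = r v'`. The equations say `P' = -r (e^(u+v) + e^v)` and
`Q' = -r (e^(u+v) - e^u)`, and the Pohozaev function `P Q + r² (e^(u+v) + e^v - e^u)` has
derivative `2 r (e^(u+v) + e^v - e^u)`. At `0` the logarithmic singularities force `P → 2 N₁`,
`Q → 2 N₂`, while `P → -2 β₁`, `Q → -2 β₂` at infinity. Integrating the three derivatives over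
`(0, ∞)` therefore expresses `A = ∫ t e^(u+v)`, `B = ∫ t e^u`, `C = ∫ t e^v` through the data:
`A + C = 2 (β₁ + N₁)`, `A - B = 2 (β₂ + N₂)` and `A + C - B = 2 (β₁ β₂ - N₁ N₂)`.
Positivity of `B`, `C` and `A` gives the three strict inequalities, and with them `β₁ > 1`.
Then `e^u` decays like `r^(-(β₁ + 1))`, so `r v' ≥ -2 β₂ - O(r^(1 - β₁))` and
`e^v ≳ r^(-2 β₂)`; integrability of `t e^v` forces `β₂ > 1`.
-/

open MeasureTheory Real Filter Set Topology

theorem tendsto_nhdsGT_of_hasDerivAt_of_integrableOn_Ioi {G D : ℝ → ℝ} {a L : ℝ}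
    (hG : ∀ r ∈ Ioi a, HasDerivAt G (D r) r) (hD : IntegrableOn D (Ioi a))
    (hGtop : Tendsto G atTop (𝓝 L)) :
    Tendsto G (𝓝[>] a) (𝓝 (L - ∫ t in Ioi a, D t)) := by
  have hG_eq : ∀ r ∈ Ioi a, L - ∫ t in Ioi r, D t = G r := fun r hr => by
    rw [integral_Ioi_of_hasDerivAt_of_tendsto' (fun x hx => hG x (mem_Ioi.2 (hr.out.trans_le hx)))
      (hD.mono_set (Ioi_subset_Ioi hr.le)) hGtop, sub_sub_cancel]
  exact (tendsto_const_nhds.sub (hD.continuousWithinAt_Ici_primitive_Ioi.mono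
    Ioi_subset_Ici_self)).congr' (eventually_nhdsWithin_of_forall hG_eq)

theorem nonpos_of_tendsto_mul_deriv_of_eventually_ge {f f' : ℝ → ℝ} {C ℓ : ℝ}
    (hf : ∀ᶠ r in 𝓝[>] 0, HasDerivAt f (f' r) r) (hC : ∀ᶠ r in 𝓝[>] 0, C ≤ f r)
    (hℓ : Tendsto (fun r => r * f' r) (𝓝[>] 0) (𝓝 ℓ)) : ℓ ≤ 0 := by
  by_contra! hℓ_pos
  obtain ⟨δ, hδ, hsub⟩ := mem_nhdsGT_iff_exists_Ioo_subset.mp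
    (hf.and (hℓ.eventually (lt_mem_nhds (half_lt_self hℓ_pos))))
  -- `f - (ℓ / 2) log` increases on `(0, δ)`, so `f r → -∞` as `r → 0⁺`, against `C ≤ f`
  have hmono : MonotoneOn (fun r => f r - ℓ / 2 * log r) (Ioo 0 δ) := by
    have hderiv : ∀ r ∈ Ioo 0 δ,
        HasDerivAt (fun r => f r - ℓ / 2 * log r) (f' r - ℓ / 2 * r⁻¹) r := fun r hr =>
      (hsub hr).1.sub ((hasDerivAt_log hr.1.ne').const_mul _)
    refine monotoneOn_of_hasDerivWithinAt_nonneg (f' := fun r => f' r - ℓ / 2 * r⁻¹)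
      (convex_Ioo 0 δ) (fun r hr => (hderiv r hr).continuousAt.continuousWithinAt) ?_ ?_ <;>
      rw [interior_Ioo]
    · exact fun r hr => (hderiv r hr).hasDerivWithinAt
    · intro r hr
      have h := (hsub hr).2
      rw [sub_nonneg, ← div_eq_mul_inv, div_le_iff₀ hr.1]
      linarith
  have hs : δ / 2 ∈ Ioo 0 δ := ⟨half_pos hδ, half_lt_self hδ⟩
  have hbot : Tendsto (fun r => f (δ / 2) - ℓ / 2 * log (δ / 2) + ℓ / 2 * log r)
      (𝓝[>] 0) atBot :=
    tendsto_atBot_add_const_left _ _ (tendsto_log_nhdsGT_zero.const_mul_atBot (half_pos hℓ_pos))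
  have hnear : ∀ᶠ r in 𝓝[>] 0, r ∈ Ioo 0 (δ / 2) := Ioo_mem_nhdsGT hs.1
  obtain ⟨r, hCr, hr, hlow⟩ :=
    (hC.and (hnear.and (hbot.eventually (eventually_lt_atBot C)))).exists
  have hfr := hmono ⟨hr.1, hr.2.trans hs.2⟩ hs hr.2.le
  simp only at hfr
  linarith

theorem eq_of_tendsto_mul_deriv_of_abs_sub_mul_log_le {w w' : ℝ → ℝ} {N C L : ℝ}
    (hw : ∀ᶠ r in 𝓝[>] 0, HasDerivAt w (w' r) r)
    (hC : ∀ᶠ r in 𝓝[>] 0, |w r - N * log r| ≤ C)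
    (hL : Tendsto (fun r => r * w' r) (𝓝[>] 0) (𝓝 L)) : L = N := by
  have hderiv : ∀ᶠ r in 𝓝[>] 0,
      HasDerivAt (fun r => w r - N * log r) (w' r - N * r⁻¹) r := by
    filter_upwards [hw, self_mem_nhdsWithin] with r hr hr0
    exact hr.sub ((hasDerivAt_log (ne_of_gt hr0)).const_mul N)
  have hlim : Tendsto (fun r => r * (w' r - N * r⁻¹)) (𝓝[>] 0) (𝓝 (L - N)) := by
    refine (hL.sub_const N).congr' ?_
    filter_upwards [self_mem_nhdsWithin] with r (hr : 0 < r)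
    field_simp
  have hle := nonpos_of_tendsto_mul_deriv_of_eventually_ge hderiv
    (hC.mono fun r h => neg_le_of_abs_le h) hlim
  have hge := nonpos_of_tendsto_mul_deriv_of_eventually_ge (f' := fun r => -(w' r - N * r⁻¹))
    (hderiv.mono fun r h => h.neg) (hC.mono fun r h => neg_le_neg (le_of_abs_le h))
    (by simpa only [mul_neg] using hlim.neg)
  linarith

theorem tendsto_mul_deriv_nhdsGT_zero_of_abs_sub_mul_log_le {w w' D : ℝ → ℝ} {N C L : ℝ}
    (hw : ∀ r ∈ Ioi 0, HasDerivAt w (w' r) r)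
    (hP : ∀ r ∈ Ioi 0, HasDerivAt (fun s => s * w' s) (D r) r) (hD : IntegrableOn D (Ioi 0))
    (hC : ∀ᶠ r in 𝓝[>] 0, |w r - N * log r| ≤ C)
    (hL : Tendsto (fun r => r * w' r) atTop (𝓝 L)) :
    L - ∫ t in Ioi 0, D t = N ∧ Tendsto (fun r => r * w' r) (𝓝[>] 0) (𝓝 N) := by
  have h := tendsto_nhdsGT_of_hasDerivAt_of_integrableOn_Ioi hP hD hL
  have hN := eq_of_tendsto_mul_deriv_of_abs_sub_mul_log_le (eventually_nhdsWithin_of_forall hw) hC h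
  exact ⟨hN, hN ▸ h⟩

theorem eventually_le_of_abs_sub_mul_log_le {w : ℝ → ℝ} {N C : ℝ} (hN : 0 ≤ N)
    (h : ∀ᶠ r in 𝓝[>] 0, |w r - N * log r| ≤ C) : ∀ᶠ r in 𝓝[>] 0, w r ≤ C := by
  filter_upwards [h, Ioo_mem_nhdsGT one_pos] with r hr hr1
  have := mul_nonpos_of_nonneg_of_nonpos hN (log_nonpos hr1.1.le hr1.2.le)
  linarith [le_of_abs_le hr]

theorem setIntegral_Ioi_pos {f : ℝ → ℝ} {a : ℝ} (hf : IntegrableOn f (Ioi a))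
    (hpos : ∀ t ∈ Ioi a, 0 < f t) : 0 < ∫ t in Ioi a, f t := by
  rw [setIntegral_pos_iff_support_of_nonneg_ae
    ((ae_restrict_mem measurableSet_Ioi).mono fun t ht => (hpos t ht).le) hf,
    inter_eq_right.2 fun t ht => Function.mem_support.2 (hpos t ht).ne', volume_Ioi]
  exact ENNReal.zero_lt_top

theorem exists_mul_rpow_le_exp_of_mul_deriv_ge {w w' : ℝ → ℝ} {a m K p : ℝ} (ha : 0 < a)
    (hK : 0 ≤ K) (hp : 0 < p) (hw : ∀ r ∈ Ici a, HasDerivAt w (w' r) r)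
    (hge : ∀ r ∈ Ici a, -m - K * r ^ (-p) ≤ r * w' r) :
    ∃ c > 0, ∀ r ∈ Ici a, c * r ^ (-m) ≤ exp (w r) := by
  -- `φ' r = (-m - K r^(-p)) / r`, the assumed lower bound for `w' r`
  set φ : ℝ → ℝ := fun r => -m * log r + K / p * r ^ (-p)
  have hφ : ∀ r ∈ Ioi 0, HasDerivAt φ (-m * r⁻¹ + K / p * (-p * r ^ (-p - 1))) r :=
    fun r hr => ((hasDerivAt_log hr.out.ne').const_mul _).add
      ((hasDerivAt_rpow_const (Or.inl hr.out.ne')).const_mul _)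
  have hmono : MonotoneOn (fun r => w r - φ r) (Ici a) := by
    have hderiv : ∀ r ∈ Ici a, HasDerivAt (fun r => w r - φ r)
        (w' r - (-m * r⁻¹ + K / p * (-p * r ^ (-p - 1)))) r :=
      fun r hr => (hw r hr).sub (hφ r (ha.trans_le hr))
    refine monotoneOn_of_hasDerivWithinAt_nonneg (convex_Ici a)
      (fun r hr => (hderiv r hr).continuousAt.continuousWithinAt)
      (fun r hr => (hderiv r (interior_subset hr)).hasDerivWithinAt) fun r hr => ?_
    rw [interior_Ici] at hr
    have hr0 : 0 < r := ha.trans hr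
    have hrpow : r ^ (-p - 1) = r ^ (-p) * r⁻¹ := by
      rw [rpow_sub hr0, rpow_one, div_eq_mul_inv]
    have := hge r hr.out.le
    rw [hrpow, sub_nonneg]
    field_simp
    nlinarith
  refine ⟨exp (w a - φ a), exp_pos _, fun r hr => ?_⟩
  have hr0 : 0 < r := ha.trans_le hr
  have hle : w a - φ a - m * log r ≤ w r := by
    have hφr := hmono self_mem_Ici hr hr
    have hpos : 0 ≤ K / p * r ^ (-p) := by positivity
    simp only [φ] at hφr
    linarith
  calc exp (w a - φ a) * r ^ (-m) = exp (w a - φ a - m * log r) := by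
        rw [rpow_def_of_pos hr0, ← exp_add]; ring_nf
    _ ≤ exp (w r) := exp_le_exp.2 hle

theorem lt_neg_one_of_mul_rpow_le_of_integrableOn {g : ℝ → ℝ} {a c s : ℝ} (ha : 0 < a)
    (hc : 0 < c) (hle : ∀ t ∈ Ioi a, c * t ^ s ≤ g t) (hg : IntegrableOn g (Ioi a)) :
    s < -1 := by
  rw [← integrableOn_Ioi_rpow_iff ha]
  refine (hg.const_mul c⁻¹).mono' ?_ ?_
  · exact ContinuousOn.aestronglyMeasurable (fun t ht =>
      (continuousAt_rpow_const t s (Or.inl (ha.trans ht).ne')).continuousWithinAt)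
      measurableSet_Ioi
  · filter_upwards [ae_restrict_mem measurableSet_Ioi] with t ht
    rw [norm_of_nonneg (rpow_nonneg (ha.trans ht).le s), ← div_eq_inv_mul, le_div_iff₀ hc,
      mul_comm]
    exact hle t ht

theorem exists_integral_Ioi_mul_exp_le_rpow {u u' : ℝ → ℝ} {a p : ℝ} (ha : 0 < a) (hp : 0 < p)
    (hu : ∀ r ∈ Ici a, HasDerivAt u (u' r) r) (hle : ∀ r ∈ Ici a, r * u' r ≤ -(p + 2))
    (hint : IntegrableOn (fun t => t * exp (u t)) (Ioi a)) :
    ∃ K ≥ 0, ∀ r ∈ Ici a, ∫ t in Ioi r, t * exp (u t) ≤ K * r ^ (-p) := by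
  obtain ⟨c, hc, hlow⟩ := exists_mul_rpow_le_exp_of_mul_deriv_ge (w := fun r => -u r)
    (m := -(p + 2)) (K := 0) ha le_rfl one_pos (fun r hr => (hu r hr).neg)
    (fun r hr => by linarith [hle r hr])
  refine ⟨c⁻¹ / p, by positivity, fun r hr => ?_⟩
  have hr0 : 0 < r := ha.trans_le hr
  have hpt : ∀ t ∈ Ioi r, t * exp (u t) ≤ c⁻¹ * t ^ (-p - 1) := fun t ht => by
    have ht0 : 0 < t := hr0.trans ht
    have h := hlow t (hr.trans ht.out.le)
    rw [neg_neg, exp_neg, le_inv_comm₀ (by positivity) (exp_pos _), mul_inv,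
      ← rpow_neg ht0.le] at h
    calc t * exp (u t) ≤ t * (c⁻¹ * t ^ (-(p + 2))) := by gcongr
      _ = c⁻¹ * t ^ (-p - 1) := by
        rw [show -p - 1 = 1 + -(p + 2) by ring, rpow_add ht0, rpow_one]; ring
  calc ∫ t in Ioi r, t * exp (u t) ≤ ∫ t in Ioi r, c⁻¹ * t ^ (-p - 1) :=
        setIntegral_mono_on (hint.mono_set (Ioi_subset_Ioi hr))
          ((integrableOn_Ioi_rpow_of_lt (by linarith) hr0).const_mul _) measurableSet_Ioi hpt
    _ = c⁻¹ / p * r ^ (-p) := by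
        rw [integral_const_mul, integral_Ioi_rpow_of_lt (by linarith) hr0, sub_add_cancel]
        field_simp

theorem one_lt_of_mul_deriv_tendsto_of_integrableOn {u u' v v' D : ℝ → ℝ} {β₁ β₂ : ℝ}
    (hβ₁ : 1 < β₁) (hu : ∀ r ∈ Ioi 0, HasDerivAt u (u' r) r)
    (hv : ∀ r ∈ Ioi 0, HasDerivAt v (v' r) r)
    (hQ : ∀ r ∈ Ioi 0, HasDerivAt (fun s => s * v' s) (D r) r) (hD : IntegrableOn D (Ioi 0))
    (hDle : ∀ t ∈ Ioi 0, D t ≤ t * exp (u t))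
    (hlimu : Tendsto (fun r => r * u' r) atTop (𝓝 (-2 * β₁)))
    (hlimv : Tendsto (fun r => r * v' r) atTop (𝓝 (-2 * β₂)))
    (hintu : IntegrableOn (fun t => t * exp (u t)) (Ioi 0))
    (hintv : IntegrableOn (fun t => t * exp (v t)) (Ioi 0)) : 1 < β₂ := by
  obtain ⟨a₀, ha₀⟩ := eventually_atTop.1 <| hlimu.eventually <|
    eventually_lt_nhds (show -2 * β₁ < -(β₁ - 1 + 2) by linarith)
  set a := max a₀ 1
  have ha : 0 < a := zero_lt_one.trans_le (le_max_right _ _)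
  have hIci : Ici a ⊆ Ioi 0 := fun r hr => ha.trans_le hr
  obtain ⟨K, hK, htail⟩ := exists_integral_Ioi_mul_exp_le_rpow ha (sub_pos.2 hβ₁)
    (fun r hr => hu r (hIci hr)) (fun r hr => (ha₀ r ((le_max_left _ _).trans hr)).le)
    (hintu.mono_set (Ioi_subset_Ioi ha.le))
  -- the flux `r v'` falls short of its limit by at most the tail of `∫ t e^u`
  have hQlow : ∀ r ∈ Ici a, -(2 * β₂) - K * r ^ (-(β₁ - 1)) ≤ r * v' r := fun r hr => by
    have hr0 : 0 < r := hIci hr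
    have hflux := integral_Ioi_of_hasDerivAt_of_tendsto'
      (fun x hx => hQ x (hr0.trans_le hx)) (hD.mono_set (Ioi_subset_Ioi hr0.le)) hlimv
    have hmono : ∫ t in Ioi r, D t ≤ ∫ t in Ioi r, t * exp (u t) :=
      setIntegral_mono_on (hD.mono_set (Ioi_subset_Ioi hr0.le))
        (hintu.mono_set (Ioi_subset_Ioi hr0.le)) measurableSet_Ioi
        fun t ht => hDle t (hr0.trans ht)
    linarith [htail r hr]
  obtain ⟨c, hc, hvlow⟩ := exists_mul_rpow_le_exp_of_mul_deriv_ge ha hK (sub_pos.2 hβ₁)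
    (fun r hr => hv r (hIci hr)) hQlow
  have hs := lt_neg_one_of_mul_rpow_le_of_integrableOn (s := 1 - 2 * β₂) ha hc (fun t ht => by
      have ht0 : 0 < t := ha.trans ht
      calc c * t ^ (1 - 2 * β₂) = t * (c * t ^ (-(2 * β₂))) := by
            rw [sub_eq_add_neg, rpow_add ht0, rpow_one]; ring
        _ ≤ t * exp (v t) := by gcongr; exact hvlow t ht.out.le)
    (hintv.mono_set (Ioi_subset_Ioi ha.le))
  linarith

theorem ContDiffOn.hasDerivAt_deriv_and_mul_deriv {w : ℝ → ℝ} {s : Set ℝ} (hw : ContDiffOn ℝ 2 w s)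
    (hs : IsOpen s) {r : ℝ} (hr : r ∈ s) :
    HasDerivAt w (deriv w r) r ∧
      HasDerivAt (fun x => x * deriv w x) (deriv (fun x => x * deriv w x) r) r := by
  obtain ⟨hw₁, -, hw₂⟩ := (contDiffOn_succ_iff_deriv_of_isOpen (n := 1) hs).1 hw
  exact ⟨(hw₁.differentiableAt (hs.mem_nhds hr)).hasDerivAt,
    (differentiableAt_id.mul ((hw₂.differentiableOn one_ne_zero).differentiableAt
      (hs.mem_nhds hr))).hasDerivAt⟩

noncomputable def pohozaev (u v : ℝ → ℝ) (r : ℝ) : ℝ :=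
  r * deriv u r * (r * deriv v r) + r ^ 2 * (exp (u r + v r) + exp (v r) - exp (u r))

theorem hasDerivAt_pohozaev {u v : ℝ → ℝ} {r : ℝ} (hu : HasDerivAt u (deriv u r) r)
    (hv : HasDerivAt v (deriv v r) r)
    (hP : HasDerivAt (fun s => s * deriv u s) (-(r * exp (u r + v r) + r * exp (v r))) r)
    (hQ : HasDerivAt (fun s => s * deriv v s) (-(r * exp (u r + v r) - r * exp (u r))) r) :
    HasDerivAt (pohozaev u v) (2 * (r * exp (u r + v r) + r * exp (v r) - r * exp (u r))) r := by
  have hE := (((hu.add hv).exp).add hv.exp).sub hu.exp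
  refine ((hP.mul hQ).add ((hasDerivAt_pow 2 r).mul hE)).congr_deriv ?_
  simp only [Pi.add_apply, Pi.sub_apply, exp_add]
  ring

theorem tendsto_sq_mul_exp_nhdsGT_zero {w : ℝ → ℝ} {C : ℝ} (hw : ∀ᶠ r in 𝓝[>] 0, w r ≤ C) :
    Tendsto (fun r => r ^ 2 * exp (w r)) (𝓝[>] 0) (𝓝 0) := by
  have h : Tendsto (fun r : ℝ => r ^ 2 * exp C) (𝓝[>] 0) (𝓝 0) := by
    have hc : Continuous fun r : ℝ => r ^ 2 * exp C := by fun_prop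
    simpa using (hc.tendsto 0).mono_left nhdsWithin_le_nhds
  refine squeeze_zero' (Eventually.of_forall fun r => by positivity) (hw.mono fun r hr => ?_) h
  gcongr

theorem tendsto_pohozaev_nhdsGT_zero {u v : ℝ → ℝ} {p q Cu Cv : ℝ}
    (hP : Tendsto (fun r => r * deriv u r) (𝓝[>] 0) (𝓝 p))
    (hQ : Tendsto (fun r => r * deriv v r) (𝓝[>] 0) (𝓝 q))
    (hu : ∀ᶠ r in 𝓝[>] 0, u r ≤ Cu) (hv : ∀ᶠ r in 𝓝[>] 0, v r ≤ Cv) :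
    Tendsto (pohozaev u v) (𝓝[>] 0) (𝓝 (p * q)) := by
  have huv := tendsto_sq_mul_exp_nhdsGT_zero (hu.and hv |>.mono fun r h => add_le_add h.1 h.2)
  have h := (hP.mul hQ).add
    ((huv.add (tendsto_sq_mul_exp_nhdsGT_zero hv)).sub (tendsto_sq_mul_exp_nhdsGT_zero hu))
  rw [add_zero, sub_zero, add_zero] at h
  exact h.congr fun r => by simp only [pohozaev]; ring

theorem tendsto_pohozaev_atTop {u v : ℝ → ℝ} {p q : ℝ}
    (hP : Tendsto (fun r => r * deriv u r) atTop (𝓝 p))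
    (hQ : Tendsto (fun r => r * deriv v r) atTop (𝓝 q))
    (hdecay : Tendsto (fun r => r ^ 2 * (exp (u r + v r) + exp (v r) + exp (u r))) atTop (𝓝 0)) :
    Tendsto (pohozaev u v) atTop (𝓝 (p * q)) := by
  have hE : Tendsto (fun r => r ^ 2 * (exp (u r + v r) + exp (v r) - exp (u r))) atTop (𝓝 0) := by
    refine squeeze_zero_norm (fun r => ?_) hdecay
    rw [norm_mul, norm_of_nonneg (sq_nonneg r)]
    gcongr
    rw [Real.norm_eq_abs, abs_le]
    constructor <;> linarith [exp_pos (u r + v r), exp_pos (v r), exp_pos (u r)]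
  rw [← add_zero (p * q)]
  exact (hP.mul hQ).add hE

theorem pohozaev_identity {u v : ℝ → ℝ} {p₀ q₀ p q Cu Cv : ℝ}
    (hu : ∀ r ∈ Ioi 0, HasDerivAt u (deriv u r) r) (hv : ∀ r ∈ Ioi 0, HasDerivAt v (deriv v r) r)
    (hP : ∀ r ∈ Ioi 0,
      HasDerivAt (fun s => s * deriv u s) (-(r * exp (u r + v r) + r * exp (v r))) r)
    (hQ : ∀ r ∈ Ioi 0,
      HasDerivAt (fun s => s * deriv v s) (-(r * exp (u r + v r) - r * exp (u r))) r)
    (hintuv : IntegrableOn (fun t => t * exp (u t + v t)) (Ioi 0))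
    (hintv : IntegrableOn (fun t => t * exp (v t)) (Ioi 0))
    (hintu : IntegrableOn (fun t => t * exp (u t)) (Ioi 0))
    (hP0 : Tendsto (fun r => r * deriv u r) (𝓝[>] 0) (𝓝 p₀))
    (hQ0 : Tendsto (fun r => r * deriv v r) (𝓝[>] 0) (𝓝 q₀))
    (hu0 : ∀ᶠ r in 𝓝[>] 0, u r ≤ Cu) (hv0 : ∀ᶠ r in 𝓝[>] 0, v r ≤ Cv)
    (hPtop : Tendsto (fun r => r * deriv u r) atTop (𝓝 p))
    (hQtop : Tendsto (fun r => r * deriv v r) atTop (𝓝 q))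
    (hdecay : Tendsto (fun r => r ^ 2 * (exp (u r + v r) + exp (v r) + exp (u r))) atTop (𝓝 0)) :
    p * q - 2 * ((∫ t in Ioi 0, t * exp (u t + v t)) + (∫ t in Ioi 0, t * exp (v t))
      - ∫ t in Ioi 0, t * exp (u t)) = p₀ * q₀ := by
  have hint_sum : IntegrableOn (fun t => t * exp (u t + v t) + t * exp (v t)) (Ioi 0) :=
    hintuv.add hintv
  have h := tendsto_nhdsGT_of_hasDerivAt_of_integrableOn_Ioi
    (fun r hr => hasDerivAt_pohozaev (hu r hr) (hv r hr) (hP r hr) (hQ r hr))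
    ((hint_sum.sub hintu).const_mul 2) (tendsto_pohozaev_atTop hPtop hQtop hdecay)
  rw [integral_const_mul, integral_sub hint_sum hintu,
    integral_add hintuv hintv] at h
  exact tendsto_nhds_unique h (tendsto_pohozaev_nhdsGT_zero hP0 hQ0 hu0 hv0)

theorem stmt14_general (N₁ N₂ : ℕ) (β₁ β₂ : ℝ) (hβ₂ : 0 < β₂) (u v : ℝ → ℝ)
    (hu : ContDiffOn ℝ 2 u (Set.Ioi 0)) (hv : ContDiffOn ℝ 2 v (Set.Ioi 0))
    (hODEu : ∀ r > (0 : ℝ),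
      deriv (fun s => s * deriv u s) r = -(r * Real.exp (v r) * (Real.exp (u r) + 1)))
    (hODEv : ∀ r > (0 : ℝ),
      deriv (fun s => s * deriv v s) r = -(r * Real.exp (u r) * (Real.exp (v r) - 1)))
    (hu0 : ∃ C ε, 0 < ε ∧ ∀ r ∈ Set.Ioo (0 : ℝ) ε, |u r - 2 * N₁ * Real.log r| ≤ C)
    (hv0 : ∃ C ε, 0 < ε ∧ ∀ r ∈ Set.Ioo (0 : ℝ) ε, |v r - 2 * N₂ * Real.log r| ≤ C)
    (hintu : IntegrableOn (fun t => t * Real.exp (u t)) (Set.Ioi 0))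
    (hintv : IntegrableOn (fun t => t * Real.exp (v t)) (Set.Ioi 0))
    (hintuv : IntegrableOn (fun t => t * Real.exp (u t + v t)) (Set.Ioi 0))
    (hlimu : Tendsto (fun r => r * deriv u r) atTop (nhds (-2 * β₁)))
    (hlimv : Tendsto (fun r => r * deriv v r) atTop (nhds (-2 * β₂)))
    (hdecay : Tendsto
      (fun r => r ^ 2 * (Real.exp (u r + v r) + Real.exp (v r) + Real.exp (u r)))
      atTop (nhds 0)) :
    0 < (β₁ - 1) * (β₂ - 1) ∧ (β₁ - 1) * (β₂ - 1) < (N₁ + 1) * (N₂ + 1) ∧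
    β₂ * (β₁ - 1) > N₂ * (N₁ + 1) ∧
    0 < β₁ * (β₂ - 1) ∧ β₁ * (β₂ - 1) < N₁ * (N₂ + 1) := by
  have hu' r (hr : r ∈ Ioi 0) := (hu.hasDerivAt_deriv_and_mul_deriv isOpen_Ioi hr).1
  have hv' r (hr : r ∈ Ioi 0) := (hv.hasDerivAt_deriv_and_mul_deriv isOpen_Ioi hr).1
  have hP : ∀ r ∈ Ioi 0,
      HasDerivAt (fun s => s * deriv u s) (-(r * exp (u r + v r) + r * exp (v r))) r :=
    fun r hr => (hu.hasDerivAt_deriv_and_mul_deriv isOpen_Ioi hr).2.congr_deriv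
      (by rw [hODEu r hr, exp_add]; ring)
  have hQ : ∀ r ∈ Ioi 0,
      HasDerivAt (fun s => s * deriv v s) (-(r * exp (u r + v r) - r * exp (u r))) r :=
    fun r hr => (hv.hasDerivAt_deriv_and_mul_deriv isOpen_Ioi hr).2.congr_deriv
      (by rw [hODEv r hr, exp_add]; ring)
  obtain ⟨Cu, εu, hεu, hCu⟩ := hu0
  obtain ⟨Cv, εv, hεv, hCv⟩ := hv0
  replace hCu := mem_of_superset (Ioo_mem_nhdsGT hεu) hCu
  replace hCv := mem_of_superset (Ioo_mem_nhdsGT hεv) hCv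
  obtain ⟨hA, hP0⟩ :=
    tendsto_mul_deriv_nhdsGT_zero_of_abs_sub_mul_log_le hu' hP (hintuv.add hintv).neg hCu hlimu
  obtain ⟨hB, hQ0⟩ :=
    tendsto_mul_deriv_nhdsGT_zero_of_abs_sub_mul_log_le hv' hQ (hintuv.sub hintu).neg hCv hlimv
  have hF := pohozaev_identity hu' hv' hP hQ hintuv hintv hintu hP0 hQ0
    (eventually_le_of_abs_sub_mul_log_le (by positivity) hCu)
    (eventually_le_of_abs_sub_mul_log_le (by positivity) hCv) hlimu hlimv hdecay
  rw [integral_neg, integral_add hintuv hintv] at hA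
  rw [integral_neg, integral_sub hintuv hintu] at hB
  have hApos := setIntegral_Ioi_pos hintuv fun t ht => mul_pos ht (exp_pos _)
  have hBpos := setIntegral_Ioi_pos hintu fun t ht => mul_pos ht (exp_pos _)
  have hCpos := setIntegral_Ioi_pos hintv fun t ht => mul_pos ht (exp_pos _)
  have hβ₁1 : 1 < β₁ := by nlinarith
  have hβ₂1 : 1 < β₂ := one_lt_of_mul_deriv_tendsto_of_integrableOn hβ₁1 hu' hv' hQ
    (hintuv.sub hintu).neg (fun t ht => by linarith [mul_pos ht (exp_pos (u t + v t))])
    hlimu hlimv hintu hintv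
  refine ⟨by nlinarith, by nlinarith, by nlinarith, by nlinarith, by nlinarith⟩

theorem stmt14 (N₁ N₂ : ℕ) (β₁ β₂ : ℝ) (hβ₁ : 0 < β₁) (hβ₂ : 0 < β₂) (u v : ℝ → ℝ)
    (hu : ContDiffOn ℝ 2 u (Set.Ioi 0)) (hv : ContDiffOn ℝ 2 v (Set.Ioi 0))
    (hODEu : ∀ r > (0 : ℝ),
      deriv (fun s => s * deriv u s) r = -(r * Real.exp (v r) * (Real.exp (u r) + 1)))
    (hODEv : ∀ r > (0 : ℝ),
      deriv (fun s => s * deriv v s) r = -(r * Real.exp (u r) * (Real.exp (v r) - 1)))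
    (hu0 : ∃ C ε, 0 < ε ∧ ∀ r ∈ Set.Ioo (0 : ℝ) ε, |u r - 2 * N₁ * Real.log r| ≤ C)
    (hv0 : ∃ C ε, 0 < ε ∧ ∀ r ∈ Set.Ioo (0 : ℝ) ε, |v r - 2 * N₂ * Real.log r| ≤ C)
    (hintu : IntegrableOn (fun t => t * Real.exp (u t)) (Set.Ioi 0))
    (hintv : IntegrableOn (fun t => t * Real.exp (v t)) (Set.Ioi 0))
    (hintuv : IntegrableOn (fun t => t * Real.exp (u t + v t)) (Set.Ioi 0))
    (hlimu : Tendsto (fun r => r * deriv u r) atTop (nhds (-2 * β₁)))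
    (hlimv : Tendsto (fun r => r * deriv v r) atTop (nhds (-2 * β₂)))
    (hdecay : Tendsto
      (fun r => r ^ 2 * (Real.exp (u r + v r) + Real.exp (v r) + Real.exp (u r)))
      atTop (nhds 0)) :
    0 < (β₁ - 1) * (β₂ - 1) ∧ (β₁ - 1) * (β₂ - 1) < (N₁ + 1) * (N₂ + 1) ∧
    β₂ * (β₁ - 1) > N₂ * (N₁ + 1) ∧
    0 < β₁ * (β₂ - 1) ∧ β₁ * (β₂ - 1) < N₁ * (N₂ + 1) :=
  stmt14_general N₁ N₂ β₁ β₂ hβ₂ u v hu hv hODEu hODEv hu0 hv0 hintu hintv hintuv hlimu hlimv hdecay
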